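/- arXiv:2107.05310 — 2 statements merged into one kernel-verified Lean document; each statement's English description precedes it below -/
import Mathlib

section
/- Let ξ^n, ξ : [0,∞) → ℝ (n ≥ 1) be continuous functions with ξ^n_0 = ξ_0 = 0 such that ξ^n → ξ uniformly on compact subsets of [0,∞) as n → ∞, and let x > 0. Then for every T < ζ_x one has ζ^n_x > T for all sufficiently large n, and sup_{t∈[0,T]} |g^n_t(x) − g_t(x)| → 0 as n → ∞, where g(x) and g^n(x) denote the Loewner trajectories of x driven by ξ and ξ^n, with swallowing times ζ_x and ζ^n_x. -/
open MeasureTheory Filter Set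

/-- `IsLoewnerTraj ξ x ζ g` says that `g` restricted to `[0, ζ)` is the maximal solution of the
real Loewner ODE `g_t = x + ∫₀ᵗ 2/(g_s − ξ_s) ds` with `g_t > ξ_t` for `t < ζ`;
maximality means that if `ζ < ∞` then `liminf_{t → ζ⁻} (g_t − ξ_t) = 0`. -/
structure IsLoewnerTraj (ξ : ℝ → ℝ) (x : ℝ) (ζ : EReal) (g : ℝ → ℝ) : Prop where
  pos : 0 < ζ
  cont : ContinuousOn g {t : ℝ | 0 ≤ t ∧ (t : EReal) < ζ}
  gt : ∀ t : ℝ, 0 ≤ t → (t : EReal) < ζ → ξ t < g t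
  ode : ∀ t : ℝ, 0 ≤ t → (t : EReal) < ζ →
    g t = x + ∫ s in (0:ℝ)..t, 2 / (g s - ξ s)
  maximal : ζ ≠ ⊤ →
    Filter.liminf (fun t => g t - ξ t) (nhdsWithin ζ.toReal (Set.Iio ζ.toReal)) = 0

/-! Let `ε > 0` be the minimum of the gap `g_t - ξ_t` on `[0, T]` and `δ = sup_{[0,T]} |ξⁿ - ξ|`.
While the gap of `gⁿ` stays above `ε / 2`, the difference of the vector fields `2 / (gⁿ - ξⁿ)`
and `2 / (g - ξ)` is at most `4/ε² (|gⁿ - g| + δ)`, so Gronwall's inequality gives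
`|gⁿ_t - g_t| ≤ δ e^{4T/ε²}`. Once this is below `ε / 8`, the gap of `gⁿ` is at least `3ε/4`
wherever the bound holds, so it never drops to `ε / 2` on `[0, T]`: by maximality `gⁿ` is not
swallowed before `T`, and it converges to `g` uniformly on `[0, T]`. -/

open Topology Real

theorem abs_two_div_sub_two_div_le {a b α β : ℝ} (hα : 0 < α) (hβ : 0 < β) (ha : α ≤ a)
    (hb : β ≤ b) : |2 / a - 2 / b| ≤ 2 / (α * β) * |a - b| := by
  have ha0 : 0 < a := hα.trans_le ha
  have hb0 : 0 < b := hβ.trans_le hb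
  have hab : α * β ≤ a * b := mul_le_mul ha hb hβ.le ha0.le
  calc |2 / a - 2 / b| = 2 / (a * b) * |a - b| := by
        rw [div_sub_div _ _ ha0.ne' hb0.ne', abs_div, abs_of_pos (mul_pos ha0 hb0),
          show 2 * b - a * 2 = 2 * (b - a) by ring, abs_mul, abs_two, abs_sub_comm]
        ring
    _ ≤ 2 / (α * β) * |a - b| := by gcongr

structure IsLoewnerSolOn (ξ : ℝ → ℝ) (x c : ℝ) (g : ℝ → ℝ) : Prop where
  cont : ContinuousOn g (Icc 0 c)
  gt : ∀ t ∈ Icc 0 c, ξ t < g t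
  ode : ∀ t ∈ Icc 0 c, g t = x + ∫ s in (0:ℝ)..t, 2 / (g s - ξ s)

theorem IsLoewnerTraj.isLoewnerSolOn {ξ g : ℝ → ℝ} {x c : ℝ} {ζ : EReal}
    (h : IsLoewnerTraj ξ x ζ g) (hc : (c : EReal) < ζ) : IsLoewnerSolOn ξ x c g := by
  have hsub : Icc 0 c ⊆ {t : ℝ | 0 ≤ t ∧ (t : EReal) < ζ} := fun t ht =>
    ⟨ht.1, lt_of_le_of_lt (EReal.coe_le_coe_iff.2 ht.2) hc⟩
  exact ⟨h.cont.mono hsub, fun t ht => h.gt t ht.1 (hsub ht).2,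
    fun t ht => h.ode t ht.1 (hsub ht).2⟩

namespace IsLoewnerSolOn

variable {ξ η g h : ℝ → ℝ} {x c : ℝ}

theorem mono (hg : IsLoewnerSolOn ξ x c g) {c' : ℝ} (hc : c' ≤ c) : IsLoewnerSolOn ξ x c' g :=
  have hsub : Icc 0 c' ⊆ Icc 0 c := Icc_subset_Icc le_rfl hc
  ⟨hg.cont.mono hsub, fun t ht => hg.gt t (hsub ht), fun t ht => hg.ode t (hsub ht)⟩

theorem apply_zero (hg : IsLoewnerSolOn ξ x c g) (hc : 0 ≤ c) : g 0 = x := by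
  rw [hg.ode 0 (left_mem_Icc.2 hc), intervalIntegral.integral_same, add_zero]

theorem continuousOn_gap (hg : IsLoewnerSolOn ξ x c g) (hξ : ContinuousOn ξ (Icc 0 c)) :
    ContinuousOn (fun t => g t - ξ t) (Icc 0 c) :=
  hg.cont.sub hξ

theorem hasDerivWithinAt (hg : IsLoewnerSolOn ξ x c g) (hξ : ContinuousOn ξ (Icc 0 c))
    {t : ℝ} (ht : t ∈ Ico 0 c) : HasDerivWithinAt g (2 / (g t - ξ t)) (Ici t) t := by
  have hF : ContinuousOn (fun s => 2 / (g s - ξ s)) (Icc 0 c) :=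
    continuousOn_const.div (hg.continuousOn_gap hξ) fun s hs => (sub_pos.2 (hg.gt s hs)).ne'
  have hsub : Icc t c ⊆ Icc 0 c := Icc_subset_Icc ht.1 le_rfl
  have hmem : Icc t c ∈ 𝓝[>] t := Icc_mem_nhdsGT_of_mem ⟨le_rfl, ht.2⟩
  have hint : HasDerivWithinAt (fun u => x + ∫ s in (0:ℝ)..u, 2 / (g s - ξ s))
      (2 / (g t - ξ t)) (Ici t) t := by
    refine (intervalIntegral.integral_hasDerivWithinAt_right ?_ ?_ ?_).const_add x
    · exact (hF.mono (Icc_subset_Icc le_rfl ht.2.le)).intervalIntegrable_of_Icc ht.1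
    · exact ⟨Icc t c, hmem, (hF.mono hsub).aestronglyMeasurable measurableSet_Icc⟩
    · exact ((hF t ⟨ht.1, ht.2.le⟩).mono hsub).mono_of_mem_nhdsWithin hmem
  refine (hint.mono Icc_subset_Ici_self |>.congr (fun s hs => hg.ode s (hsub hs))
    (hg.ode t ⟨ht.1, ht.2.le⟩)).mono_of_mem_nhdsWithin ?_
  exact Icc_mem_nhdsGE_of_mem ⟨le_rfl, ht.2⟩

theorem abs_sub_le (hg : IsLoewnerSolOn ξ x c g) (hh : IsLoewnerSolOn η x c h)
    (hξ : ContinuousOn ξ (Icc 0 c)) (hη : ContinuousOn η (Icc 0 c)) {α β δ : ℝ}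
    (hα : 0 < α) (hβ : 0 < β) (hgξ : ∀ t ∈ Ico 0 c, α ≤ g t - ξ t)
    (hhη : ∀ t ∈ Ico 0 c, β ≤ h t - η t) (hξη : ∀ t ∈ Ico 0 c, |ξ t - η t| ≤ δ) :
    ∀ t ∈ Icc 0 c, |g t - h t| ≤ δ * (exp (2 / (α * β) * t) - 1) := by
  intro t ht
  set K := 2 / (α * β)
  have hK : 0 < K := by positivity
  have hbound : ∀ s ∈ Ico 0 c,
      ‖2 / (g s - ξ s) - 2 / (h s - η s)‖ ≤ K * ‖g s - h s‖ + K * δ := by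
    intro s hs
    have hdiff : |(g s - ξ s) - (h s - η s)| ≤ |g s - h s| + δ := by
      calc |(g s - ξ s) - (h s - η s)| = |(g s - h s) - (ξ s - η s)| := by
            congr 1; ring
        _ ≤ |g s - h s| + |ξ s - η s| := abs_sub _ _
        _ ≤ |g s - h s| + δ := by gcongr; exact hξη s hs
    rw [Real.norm_eq_abs, Real.norm_eq_abs, ← mul_add]
    exact (abs_two_div_sub_two_div_le hα hβ (hgξ s hs) (hhη s hs)).trans (by gcongr)
  have hzero : ‖g 0 - h 0‖ ≤ 0 := by
    rw [hg.apply_zero (ht.1.trans ht.2), hh.apply_zero (ht.1.trans ht.2)]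
    simp
  have := norm_le_gronwallBound_of_norm_deriv_right_le (hg.cont.sub hh.cont)
    (fun s hs => (hg.hasDerivWithinAt hξ hs).sub (hh.hasDerivWithinAt hη hs)) hzero hbound t ht
  rw [gronwallBound_of_K_ne_0 hK.ne', Real.norm_eq_abs, sub_zero, Pi.sub_apply] at this
  simpa only [zero_mul, zero_add, mul_div_cancel_left₀ _ hK.ne'] using this

theorem exists_pos_le_gap (hg : IsLoewnerSolOn ξ x c g) (hξ : ContinuousOn ξ (Icc 0 c))
    (hc : 0 ≤ c) : ∃ ε > 0, ∀ t ∈ Icc 0 c, ε ≤ g t - ξ t := by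
  obtain ⟨t₀, ht₀, hmin⟩ :=
    isCompact_Icc.exists_isMinOn (nonempty_Icc.2 hc) (hg.continuousOn_gap hξ)
  exact ⟨g t₀ - ξ t₀, sub_pos.2 (hg.gt t₀ ht₀), fun t ht => hmin ht⟩

theorem half_lt_gap_and_abs_sub_le (hg : IsLoewnerSolOn ξ x c g) (hh : IsLoewnerSolOn η x c h)
    (hξ : ContinuousOn ξ (Icc 0 c)) (hη : ContinuousOn η (Icc 0 c)) {ε δ : ℝ} (hε : 0 < ε)
    (hhη : ∀ t ∈ Icc 0 c, ε ≤ h t - η t) (hξη : ∀ t ∈ Icc 0 c, |ξ t - η t| ≤ δ)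
    (hδ : δ * exp (4 / ε ^ 2 * c) ≤ ε / 8) :
    ∀ t ∈ Icc 0 c, ε / 2 < g t - ξ t ∧ |g t - h t| ≤ δ * exp (4 / ε ^ 2 * c) := by
  have hK : 2 / (ε / 2 * ε) = 4 / ε ^ 2 := by field_simp; ring
  have hGronwall : ∀ τ ∈ Icc 0 c, (∀ t ∈ Ico 0 τ, ε / 2 ≤ g t - ξ t) →
      |g τ - h τ| ≤ δ * exp (4 / ε ^ 2 * c) := by
    intro τ hτ hgap
    have hδ0 : 0 ≤ δ := (abs_nonneg _).trans (hξη 0 ⟨le_rfl, hτ.1.trans hτ.2⟩)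
    have hsub : Ico 0 τ ⊆ Icc 0 c := Ico_subset_Icc_self.trans (Icc_subset_Icc le_rfl hτ.2)
    have := (hg.mono hτ.2).abs_sub_le (hh.mono hτ.2) (hξ.mono (Icc_subset_Icc le_rfl hτ.2))
      (hη.mono (Icc_subset_Icc le_rfl hτ.2)) (half_pos hε) hε hgap
      (fun t ht => hhη t (hsub ht)) (fun t ht => hξη t (hsub ht)) τ ⟨hτ.1, le_rfl⟩
    rw [hK] at this
    refine this.trans (mul_le_mul_of_nonneg_left ?_ hδ0)
    have : exp (4 / ε ^ 2 * τ) ≤ exp (4 / ε ^ 2 * c) := by gcongr; exact hτ.2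
    linarith [exp_pos (4 / ε ^ 2 * τ)]
  have hgap : ∀ t ∈ Icc 0 c, ε / 2 < g t - ξ t := by
    by_contra! hbad
    set A := Icc 0 c ∩ (fun t => g t - ξ t) ⁻¹' Iic (ε / 2)
    have hA : IsCompact A := isCompact_Icc.of_isClosed_subset
      ((hg.continuousOn_gap hξ).preimage_isClosed_of_isClosed isClosed_Icc isClosed_Iic)
      inter_subset_left
    obtain ⟨τ, ⟨hτ, hτgap⟩, hτmin⟩ := hA.exists_isLeast (by simpa [A, Set.Nonempty] using hbad)
    -- Before the first time the gap drops to `ε / 2`, Gronwall keeps `g` within `ε / 8` of `h`,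
    -- which forces the gap at that time to be at least `3 ε / 4`.
    have hclose := hGronwall τ hτ fun t ht => le_of_lt <| not_le.1 fun hle =>
      (hτmin ⟨⟨ht.1, ht.2.le.trans hτ.2⟩, hle⟩).not_gt ht.2
    have h1 := abs_le.1 hclose
    have h2 := abs_le.1 (hξη τ hτ)
    have h3 : δ ≤ ε / 8 := by
      nlinarith [one_le_exp (by have := hτ.1.trans hτ.2; positivity : 0 ≤ 4 / ε ^ 2 * c),
        (abs_nonneg _).trans (hξη τ hτ)]
    linarith [hhη τ hτ, show g τ - ξ τ ≤ ε / 2 from hτgap]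
  exact fun t ht => ⟨hgap t ht, hGronwall t ht fun s hs => (hgap s ⟨hs.1, hs.2.le.trans ht.2⟩).le⟩

end IsLoewnerSolOn

namespace IsLoewnerTraj

variable {ξ g : ℝ → ℝ} {x : ℝ} {ζ : EReal}

-- The upper bound `M` is needed: in `ℝ`, the `liminf` of a function that is not bounded above
-- is the junk value `0`.
theorem coe_lt_of_gap_mem_Icc (hg : IsLoewnerTraj ξ x ζ g) {T m M : ℝ} (hm : 0 < m)
    (hgap : ∀ t : ℝ, 0 ≤ t → (t : EReal) < ζ → t ≤ T → g t - ξ t ∈ Icc m M) :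
    (T : EReal) < ζ := by
  by_contra! hζT
  have hζtop : ζ ≠ ⊤ := ne_top_of_le_ne_top (EReal.coe_ne_top T) hζT
  have hζbot : ζ ≠ ⊥ := ne_bot_of_gt hg.pos
  set z := ζ.toReal
  have hζz : ζ = (z : EReal) := (EReal.coe_toReal hζtop hζbot).symm
  have hz0 : 0 < z := by exact_mod_cast hζz ▸ hg.pos
  have hev : ∀ᶠ t in 𝓝[<] z, g t - ξ t ∈ Icc m M := by
    filter_upwards [self_mem_nhdsWithin, mem_nhdsWithin_of_mem_nhds (Ioi_mem_nhds hz0)]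
      with t (htz : t < z) (ht0 : 0 < t)
    have htζ : (t : EReal) < ζ := hζz ▸ EReal.coe_lt_coe_iff.2 htz
    exact hgap t ht0.le htζ (htz.le.trans (EReal.coe_le_coe_iff.1 (hζz ▸ hζT)))
  have hlim : m ≤ liminf (fun t => g t - ξ t) (𝓝[<] z) :=
    le_liminf_of_le (IsBoundedUnder.isCoboundedUnder_ge ⟨M, eventually_map.2 <| hev.mono
      fun _ ht => ht.2⟩) (hev.mono fun _ ht => ht.1)
  rw [hg.maximal hζtop] at hlim
  exact hlim.not_gt hm

theorem coe_lt_and_abs_sub_le (hg : IsLoewnerTraj ξ x ζ g) {η h : ℝ → ℝ} {T ε δ : ℝ}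
    (hh : IsLoewnerSolOn η x T h) (hξ : ContinuousOn ξ (Ici 0)) (hη : ContinuousOn η (Icc 0 T))
    (hT : 0 ≤ T) (hε : 0 < ε) (hhη : ∀ t ∈ Icc 0 T, ε ≤ h t - η t)
    (hξη : ∀ t ∈ Icc 0 T, |ξ t - η t| ≤ δ) (hδ : δ * exp (4 / ε ^ 2 * T) ≤ ε / 8) :
    (T : EReal) < ζ ∧ ∀ t ∈ Icc 0 T, |g t - h t| ≤ δ * exp (4 / ε ^ 2 * T) := by
  have hδ0 : 0 ≤ δ := (abs_nonneg _).trans (hξη 0 ⟨le_rfl, hT⟩)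
  have hstable : ∀ c ∈ Icc 0 T, (c : EReal) < ζ →
      ε / 2 < g c - ξ c ∧ |g c - h c| ≤ δ * exp (4 / ε ^ 2 * T) := by
    intro c hc hcζ
    have hsub : Icc 0 c ⊆ Icc 0 T := Icc_subset_Icc le_rfl hc.2
    have hexp : exp (4 / ε ^ 2 * c) ≤ exp (4 / ε ^ 2 * T) := by gcongr; exact hc.2
    obtain ⟨hgap, hclose⟩ := (hg.isLoewnerSolOn hcζ).half_lt_gap_and_abs_sub_le (hh.mono hc.2)
      (hξ.mono fun t ht => ht.1) (hη.mono hsub) hε (fun t ht => hhη t (hsub ht))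
      (fun t ht => hξη t (hsub ht)) ((mul_le_mul_of_nonneg_left hexp hδ0).trans hδ)
      c ⟨hc.1, le_rfl⟩
    exact ⟨hgap, hclose.trans (mul_le_mul_of_nonneg_left hexp hδ0)⟩
  obtain ⟨M, hM⟩ := isCompact_Icc.bddAbove_image (hh.continuousOn_gap hη)
  have hδε : δ ≤ ε / 8 := by nlinarith [one_le_exp (by positivity : 0 ≤ 4 / ε ^ 2 * T)]
  have hTζ : (T : EReal) < ζ := by
    refine hg.coe_lt_of_gap_mem_Icc (half_pos hε) (M := M + ε / 4) fun t ht0 htζ htT => ?_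
    obtain ⟨hgap, hclose⟩ := hstable t ⟨ht0, htT⟩ htζ
    have hhM : h t - η t ≤ M := hM ⟨t, ⟨ht0, htT⟩, rfl⟩
    refine ⟨hgap.le, ?_⟩
    linarith [abs_le.1 (hclose.trans hδ), abs_le.1 (hξη t ⟨ht0, htT⟩)]
  exact ⟨hTζ, fun t ht => (hstable t ht (lt_of_le_of_lt (EReal.coe_le_coe_iff.2 ht.2) hTζ)).2⟩

end IsLoewnerTraj

theorem stmt1_general
    (ξ : ℕ → ℝ → ℝ) (ξl : ℝ → ℝ)
    (hc : ∀ n, ContinuousOn (ξ n) (Set.Ici 0))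
    (hcl : ContinuousOn ξl (Set.Ici 0))
    (hconv : ∀ T : ℝ, 0 ≤ T →
      TendstoUniformlyOn (fun n t => ξ n t) ξl Filter.atTop (Set.Icc 0 T))
    (x : ℝ)
    (ζ : ℕ → EReal) (g : ℕ → ℝ → ℝ) (ζl : EReal) (gl : ℝ → ℝ)
    (hL : ∀ n, IsLoewnerTraj (ξ n) x (ζ n) (g n))
    (hLl : IsLoewnerTraj ξl x ζl gl) :
    ∀ T : ℝ, 0 ≤ T → (T : EReal) < ζl →
      (∀ᶠ n in Filter.atTop, (T : EReal) < ζ n) ∧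
      TendstoUniformlyOn (fun n t => g n t) gl Filter.atTop (Set.Icc 0 T) := by
  intro T hT hTζ
  have hsol := hLl.isLoewnerSolOn hTζ
  have hξl : ContinuousOn ξl (Icc 0 T) := hcl.mono fun t ht => ht.1
  obtain ⟨ε, hε, hgap⟩ := hsol.exists_pos_le_gap hξl hT
  set C := exp (4 / ε ^ 2 * T)
  have hC : 0 < C := exp_pos _
  have hstable : ∀ δ > 0, δ * C ≤ ε / 8 →
      ∀ᶠ n in atTop, (T : EReal) < ζ n ∧ ∀ t ∈ Icc 0 T, |g n t - gl t| ≤ δ * C := by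
    intro δ hδ hδC
    filter_upwards [Metric.tendstoUniformlyOn_iff.1 (hconv T hT) δ hδ] with n hn
    refine (hL n).coe_lt_and_abs_sub_le hsol (hc n) hξl hT hε hgap (fun t ht => ?_) hδC
    exact (abs_sub_comm _ _).trans_le (hn t ht).le
  refine ⟨(hstable (ε / 8 / C) (by positivity) (div_mul_cancel₀ _ hC.ne').le).mono
    fun _ hn => hn.1, Metric.tendstoUniformlyOn_iff.2 fun r hr => ?_⟩
  have hδC : min (ε / 8) (r / 2) / C * C = min (ε / 8) (r / 2) := div_mul_cancel₀ _ hC.ne'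
  filter_upwards [hstable _ (by positivity) (hδC.trans_le (min_le_left _ _))] with n hn t ht
  rw [Real.dist_eq, abs_sub_comm]
  calc |g n t - gl t| ≤ min (ε / 8) (r / 2) := hδC ▸ hn.2 t ht
    _ < r := (min_le_right _ _).trans_lt (half_lt_self hr)

/-- If continuous driving functions `ξⁿ` (vanishing at `0`) converge to `ξ` uniformly on
compact subsets of `[0,∞)`, then for `x > 0` and every `T < ζ_x`, one has `ζⁿ_x > T` for all
sufficiently large `n` and `sup_{[0,T]} |gⁿ_t(x) − g_t(x)| → 0`. -/
theorem stmt1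
    (ξ : ℕ → ℝ → ℝ) (ξl : ℝ → ℝ)
    (hc : ∀ n, ContinuousOn (ξ n) (Set.Ici 0))
    (hcl : ContinuousOn ξl (Set.Ici 0))
    (h0 : ∀ n, ξ n 0 = 0) (h0l : ξl 0 = 0)
    (hconv : ∀ T : ℝ, 0 ≤ T →
      TendstoUniformlyOn (fun n t => ξ n t) ξl Filter.atTop (Set.Icc 0 T))
    (x : ℝ) (hx : 0 < x)
    (ζ : ℕ → EReal) (g : ℕ → ℝ → ℝ) (ζl : EReal) (gl : ℝ → ℝ)
    (hL : ∀ n, IsLoewnerTraj (ξ n) x (ζ n) (g n))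
    (hLl : IsLoewnerTraj ξl x ζl gl) :
    ∀ T : ℝ, 0 ≤ T → (T : EReal) < ζl →
      (∀ᶠ n in Filter.atTop, (T : EReal) < ζ n) ∧
      TendstoUniformlyOn (fun n t => g n t) gl Filter.atTop (Set.Icc 0 T) :=
  stmt1_general ξ ξl hc hcl hconv x ζ g ζl gl hL hLl
end

section
/- Let ξ^n, ξ : [0,∞) → ℝ (n ≥ 1) be continuous functions with ξ^n_0 = ξ_0 = 0 such that ξ^n → ξ uniformly on compact subsets of [0,∞) as n → ∞, and let x > 0. Define D_t = exp(−2 ∫₀ᵗ (g_s(x) − ξ_s)^{−2} ds) for t < ζ_x, and D^n_t = exp(−2 ∫₀ᵗ (g^n_s(x) − ξ^n_s)^{−2} ds) for t < ζ^n_x. Then for every T < ζ_x, for all sufficiently large n the function D^n is defined on [0,T] and sup_{t∈[0,T]} |D^n_t − D_t| → 0 as n → ∞. (Here D_t is the spatial derivative g_t'(x) of the Loewner flow at x.) -/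
/-!
For large `n` the driver `ξⁿ` is uniformly close to `ξ` on `[0, T]`. As long as `gⁿ - ξⁿ` stays
above `ε / 2`, where `ε > 0` is the minimum of `g - ξ` on `[0, T]`, the Loewner vector field
`2 / (g - ξ)` is Lipschitz along both trajectories, so Gronwall keeps `gⁿ` uniformly close to `g`
and hence `gⁿ - ξⁿ` strictly above `ε / 2`. A continuous-induction argument, together with the
maximality of the trajectory (a point bounded away from its driver is never swallowed), carries
this to all of `[0, T]`. Then `(gⁿ - ξⁿ)⁻²` converges uniformly on `[0, T]`, hence so do its
primitives and their images under `u ↦ exp (-2u)`.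
-/

open MeasureTheory Filter Set

open scoped Topology

lemma abs_inv_sub_inv_le {a b A B : ℝ} (ha : 0 < a) (hb : 0 < b) (hA : a ≤ A) (hB : b ≤ B) :
    |A⁻¹ - B⁻¹| ≤ |A - B| / (a * b) := by
  have hA0 : 0 < A := ha.trans_le hA
  rw [inv_sub_inv hA0.ne' (hb.trans_le hB).ne', abs_div, abs_sub_comm B A,
    abs_of_pos (mul_pos hA0 (hb.trans_le hB))]
  exact div_le_div_of_nonneg_left (abs_nonneg _) (by positivity) (mul_le_mul hA hB hb.le hA0.le)

lemma uniformContinuousOn_inv_sq {c : ℝ} (hc : 0 < c) :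
    UniformContinuousOn (fun u : ℝ => (u ^ 2)⁻¹) (Ici c) := by
  have hinv : UniformContinuousOn Inv.inv (Ici c) :=
    uniformContinuousOn_inv₀ (by rw [compl_Ici]; exact Iio_mem_nhds hc)
  have hsq : UniformContinuousOn (· ^ 2) (Icc 0 c⁻¹) :=
    isCompact_Icc.uniformContinuousOn_of_continuous (continuous_pow 2).continuousOn
  simpa only [Function.comp_def, inv_pow] using
    hsq.comp hinv fun u (hu : c ≤ u) => ⟨inv_nonneg.mpr (hc.le.trans hu), inv_anti₀ hc hu⟩

lemma Real.uniformContinuousOn_exp_Iic (a : ℝ) : UniformContinuousOn Real.exp (Iic a) := by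
  have := (Complex.uniformContinuous_re.comp_uniformContinuousOn (UniformContinuousOn.cexp a)).comp
    (Complex.isometry_ofReal.uniformContinuous.uniformContinuousOn (s := Iic a))
    (fun u (hu : u ≤ a) => by simpa using hu)
  simpa only [Function.comp_def, Complex.exp_ofReal_re] using this

lemma TendstoUniformlyOn.intervalIntegral {ι E : Type*} [NormedAddCommGroup E] [NormedSpace ℝ E]
    {l : Filter ι} {F : ι → ℝ → E} {f : ℝ → E} {a b : ℝ} (h : TendstoUniformlyOn F f l (Icc a b))
    (hF : ∀ᶠ n in l, IntervalIntegrable (F n) volume a b) (hf : IntervalIntegrable f volume a b) :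
    TendstoUniformlyOn (fun n t => ∫ s in a..t, F n s) (fun t => ∫ s in a..t, f s) l (Icc a b) := by
  rw [Metric.tendstoUniformlyOn_iff] at h ⊢
  intro δ hδ
  filter_upwards [h (δ / (|b - a| + 1)) (by positivity), hF] with n hn hFn t ht
  have hsub : uIcc a t ⊆ uIcc a b := uIcc_subset_uIcc_left (Icc_subset_uIcc ht)
  rw [dist_eq_norm, ← intervalIntegral.integral_sub (hf.mono_set hsub) (hFn.mono_set hsub)]
  have hnorm : ∀ s ∈ uIoc a t, ‖f s - F n s‖ ≤ δ / (|b - a| + 1) := fun s hs => by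
    rw [uIoc_of_le ht.1] at hs
    rw [← dist_eq_norm]
    exact (hn s ⟨hs.1.le, hs.2.trans ht.2⟩).le
  calc ‖∫ s in a..t, (f s - F n s)‖ ≤ δ / (|b - a| + 1) * |t - a| :=
        intervalIntegral.norm_integral_le_of_norm_le_const hnorm
    _ ≤ δ / (|b - a| + 1) * |b - a| :=
        mul_le_mul_of_nonneg_left (abs_sub_left_of_mem_uIcc (Icc_subset_uIcc ht)) (by positivity)
    _ < δ := by
        rw [div_mul_eq_mul_div, div_lt_iff₀ (by positivity)]
        nlinarith

lemma TendstoUniformlyOn.exp_neg_mul_integral_inv_sq {ι : Type*} {l : Filter ι}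
    {F : ι → ℝ → ℝ} {f : ℝ → ℝ} {a b c k : ℝ} (h : TendstoUniformlyOn F f l (Icc a b))
    (hab : a ≤ b) (hc : 0 < c) (hk : 0 ≤ k)
    (hFc : ∀ᶠ n in l, ∀ t ∈ Icc a b, c ≤ F n t) (hfc : ∀ t ∈ Icc a b, c ≤ f t)
    (hFcont : ∀ᶠ n in l, ContinuousOn (F n) (Icc a b)) (hfcont : ContinuousOn f (Icc a b)) :
    TendstoUniformlyOn (fun n t => Real.exp (-k * ∫ s in a..t, (F n s ^ 2)⁻¹))
      (fun t => Real.exp (-k * ∫ s in a..t, (f s ^ 2)⁻¹)) l (Icc a b) := by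
  have hintegrable : ∀ φ : ℝ → ℝ, ContinuousOn φ (Icc a b) → (∀ t ∈ Icc a b, c ≤ φ t) →
      IntervalIntegrable (fun s => (φ s ^ 2)⁻¹) volume a b := fun φ hφ hφc =>
    ((hφ.pow 2).inv₀ fun s hs => pow_ne_zero 2 (hc.trans_le (hφc s hs)).ne').intervalIntegrable_of_Icc
      hab
  have hint : TendstoUniformlyOn (fun n t => ∫ s in a..t, (F n s ^ 2)⁻¹)
      (fun t => ∫ s in a..t, (f s ^ 2)⁻¹) l (Icc a b) :=
    ((uniformContinuousOn_inv_sq hc).comp_tendstoUniformlyOn_eventually hFc hfc h).intervalIntegral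
      (hFcont.and hFc |>.mono fun n hn => hintegrable _ hn.1 hn.2) (hintegrable f hfcont hfc)
  have hexp : UniformContinuousOn (fun u => Real.exp (-k * u)) (Ici 0) :=
    (Real.uniformContinuousOn_exp_Iic 0).comp
      (Real.uniformContinuous_const_mul (x := -k)).uniformContinuousOn
      fun u (hu : 0 ≤ u) => show -k * u ≤ 0 by nlinarith
  have hnonneg : ∀ φ : ℝ → ℝ, ∀ t ∈ Icc a b, (∫ s in a..t, (φ s ^ 2)⁻¹) ∈ Ici 0 :=
    fun φ _ ht => intervalIntegral.integral_nonneg ht.1 fun s _ => by positivity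
  exact hexp.comp_tendstoUniformlyOn_eventually (.of_forall fun n => hnonneg (F n))
    (hnonneg f) hint

lemma Icc_subset_of_coe_lt {T : ℝ} {ζ : EReal} (hT : (T : EReal) < ζ) :
    Icc 0 T ⊆ {t : ℝ | 0 ≤ t ∧ (t : EReal) < ζ} :=
  fun _ ht => ⟨ht.1, (EReal.coe_le_coe_iff.mpr ht.2).trans_lt hT⟩

namespace IsLoewnerTraj

variable {ξ g : ℝ → ℝ} {x : ℝ} {ζ : EReal}

lemma apply_zero (hg : IsLoewnerTraj ξ x ζ g) : g 0 = x := by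
  simpa using hg.ode 0 le_rfl (by simpa using hg.pos)

lemma sub_pos_of_mem_Icc (hg : IsLoewnerTraj ξ x ζ g) {T t : ℝ} (hT : (T : EReal) < ζ)
    (ht : t ∈ Icc 0 T) : 0 < g t - ξ t :=
  sub_pos.mpr (hg.gt t ht.1 (Icc_subset_of_coe_lt hT ht).2)

lemma continuousOn_sub (hg : IsLoewnerTraj ξ x ζ g) (hξ : ContinuousOn ξ (Ici 0)) {T : ℝ}
    (hT : (T : EReal) < ζ) : ContinuousOn (fun t => g t - ξ t) (Icc 0 T) :=
  (hg.cont.mono (Icc_subset_of_coe_lt hT)).sub (hξ.mono fun _ ht => ht.1)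

lemma exists_pos_le_sub (hg : IsLoewnerTraj ξ x ζ g) (hξ : ContinuousOn ξ (Ici 0)) {T : ℝ}
    (hT0 : 0 ≤ T) (hT : (T : EReal) < ζ) : ∃ ε > 0, ∀ t ∈ Icc 0 T, ε ≤ g t - ξ t := by
  obtain ⟨t₀, ht₀, hmin⟩ :=
    isCompact_Icc.exists_isMinOn (nonempty_Icc.mpr hT0) (hg.continuousOn_sub hξ hT)
  exact ⟨_, hg.sub_pos_of_mem_Icc hT ht₀, fun t ht => hmin ht⟩

lemma hasDerivWithinAt (hg : IsLoewnerTraj ξ x ζ g) (hξ : ContinuousOn ξ (Ici 0)) {t : ℝ}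
    (ht0 : 0 ≤ t) (ht : (t : EReal) < ζ) :
    HasDerivWithinAt g (2 / (g t - ξ t)) (Ici t) t := by
  obtain ⟨ρ, htρ, hρ⟩ := EReal.lt_iff_exists_real_btwn.mp ht
  have htρ : t < ρ := EReal.coe_lt_coe_iff.mp htρ
  have hF : ContinuousOn (fun s => 2 / (g s - ξ s)) (Icc 0 ρ) :=
    continuousOn_const.div (hg.continuousOn_sub hξ hρ) fun _ hs =>
      (hg.sub_pos_of_mem_Icc hρ hs).ne'
  have hIoo : Ioo t ρ ⊆ Icc 0 ρ := fun s hs => ⟨ht0.trans hs.1.le, hs.2.le⟩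
  have hmem : Ioo t ρ ∈ 𝓝[>] t := Ioo_mem_nhdsGT htρ
  have hprim : HasDerivWithinAt (fun u => ∫ s in (0:ℝ)..u, 2 / (g s - ξ s))
      (2 / (g t - ξ t)) (Ici t) t :=
    intervalIntegral.integral_hasDerivWithinAt_right
      ((hF.mono (Icc_subset_Icc_right htρ.le)).intervalIntegrable_of_Icc ht0)
      ⟨Ioo t ρ, hmem, (hF.mono hIoo).aestronglyMeasurable measurableSet_Ioo⟩
      ((hF t ⟨ht0, htρ.le⟩).mono_of_mem_nhdsWithin (mem_of_superset hmem hIoo))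
  refine (hprim.const_add x).congr_of_eventuallyEq ?_ (hg.ode t ht0 ht)
  filter_upwards [Ico_mem_nhdsGE htρ] with s hs
  exact hg.ode s (ht0.trans hs.1) (Icc_subset_of_coe_lt hρ ⟨ht0.trans hs.1, hs.2.le⟩).2

/-- The ODE bounds `g - ξ` above near a finite lifetime, so its `liminf` there is a genuine one,
and it is at least `c`, against maximality. -/
lemma lifetime_eq_top (hg : IsLoewnerTraj ξ x ζ g) (hξ : ContinuousOn ξ (Ici 0)) {c : ℝ}
    (hc : 0 < c) (h : ∀ t : ℝ, 0 ≤ t → (t : EReal) < ζ → c ≤ g t - ξ t) : ζ = ⊤ := by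
  by_contra hζ
  set z := ζ.toReal
  have hz : (z : EReal) = ζ := EReal.coe_toReal hζ (ne_bot_of_gt hg.pos)
  have hz0 : 0 < z := by exact_mod_cast hz ▸ hg.pos
  obtain ⟨M, hM⟩ :=
    isCompact_Icc.exists_bound_of_continuousOn (hξ.mono fun _ (ht : _ ∈ Icc 0 z) => ht.1)
  have hbdd : ∀ t ∈ Ioo 0 z, g t - ξ t ≤ x + 2 / c * z + M := fun t ht => by
    have htζ : (t : EReal) < ζ := hz ▸ EReal.coe_lt_coe_iff.mpr ht.2
    have hdrift : ∀ s ∈ uIoc 0 t, ‖2 / (g s - ξ s)‖ ≤ 2 / c := fun s hs => by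
      rw [uIoc_of_le ht.1.le] at hs
      have hcs := h s hs.1.le ((EReal.coe_le_coe_iff.mpr hs.2).trans_lt htζ)
      rw [Real.norm_eq_abs, abs_of_pos (div_pos two_pos (hc.trans_le hcs))]
      exact div_le_div_of_nonneg_left zero_le_two hc hcs
    have hgt : g t ≤ x + 2 / c * z := calc
      g t = x + ∫ s in (0:ℝ)..t, 2 / (g s - ξ s) := hg.ode t ht.1.le htζ
      _ ≤ x + 2 / c * |t - 0| := by
        gcongr
        exact (le_abs_self _).trans (intervalIntegral.norm_integral_le_of_norm_le_const hdrift)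
      _ ≤ x + 2 / c * z := by
        rw [sub_zero, abs_of_pos ht.1]
        gcongr
        exact ht.2.le
    linarith [neg_le_of_abs_le (hM t ⟨ht.1.le, ht.2.le⟩)]
  have hlim : c ≤ liminf (fun t => g t - ξ t) (𝓝[<] z) := by
    have hev : ∀ᶠ t in 𝓝[<] z, t ∈ Ioo 0 z := Ioo_mem_nhdsLT hz0
    exact le_liminf_of_le
      (IsBoundedUnder.isCoboundedUnder_ge ⟨_, hev.mono hbdd⟩)
      (hev.mono fun t ht => h t ht.1.le (hz ▸ EReal.coe_lt_coe_iff.mpr ht.2))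
  rw [hg.maximal hζ] at hlim
  exact hc.not_ge hlim

/-- Continuous induction on the first time at which `g - ξ > c` fails: by `lifetime_eq_top`
the point cannot be swallowed before it. -/
lemma forall_lt_lifetime_and_lt_sub (hg : IsLoewnerTraj ξ x ζ g) (hξ : ContinuousOn ξ (Ici 0))
    {c T : ℝ} (hc : 0 < c)
    (hstep : ∀ τ ∈ Icc 0 T, (τ : EReal) < ζ → (∀ s ∈ Ico 0 τ, c < g s - ξ s) → c < g τ - ξ τ) :
    ∀ t ∈ Icc 0 T, (t : EReal) < ζ ∧ c < g t - ξ t := by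
  by_contra! hbad
  obtain ⟨b, hb, hbζ⟩ := hbad
  set B := {t ∈ Icc 0 T | ¬((t : EReal) < ζ ∧ c < g t - ξ t)}
  have hbB : b ∈ B := ⟨hb, fun h => (hbζ h.1).not_gt h.2⟩
  have hBdd : BddBelow B := ⟨0, fun t ht => ht.1.1⟩
  set τ := sInf B
  have hτ0 : 0 ≤ τ := le_csInf ⟨b, hbB⟩ fun t ht => ht.1.1
  have hτT : τ ≤ T := (csInf_le hBdd hbB).trans hb.2
  have hbelow : ∀ s : ℝ, 0 ≤ s → s < τ → (s : EReal) < ζ ∧ c < g s - ξ s := fun s hs0 hsτ => by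
    by_contra hs
    exact (csInf_le hBdd ⟨⟨hs0, hsτ.le.trans hτT⟩, hs⟩).not_gt hsτ
  have hτζ : (τ : EReal) < ζ := by
    by_contra! hζτ
    have hζ := hg.lifetime_eq_top hξ hc fun t ht0 ht =>
      (hbelow t ht0 (EReal.coe_lt_coe_iff.mp (ht.trans_le hζτ))).2.le
    simp [hζ] at hζτ
  have hτ : c < g τ - ξ τ := hstep τ ⟨hτ0, hτT⟩ hτζ fun s hs => (hbelow s hs.1 hs.2).2
  obtain ⟨ρ, hτρ, hρ⟩ := EReal.lt_iff_exists_real_btwn.mp hτζ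
  have hτρ : τ < ρ := EReal.coe_lt_coe_iff.mp hτρ
  have hcont : ContinuousWithinAt (fun t => g t - ξ t) (Ici τ) τ :=
    (hg.continuousOn_sub hξ hρ τ ⟨hτ0, hτρ.le⟩).mono_of_mem_nhdsWithin
      (mem_of_superset (Icc_mem_nhdsGE hτρ) (Icc_subset_Icc_left hτ0))
  have hright : ∀ᶠ t : ℝ in 𝓝[≥] τ, (t : EReal) < ζ ∧ c < g t - ξ t := by
    filter_upwards [Ico_mem_nhdsGE hτρ, hcont.eventually (lt_mem_nhds hτ)] with t ht hct
    exact ⟨(EReal.coe_lt_coe_iff.mpr ht.2).trans hρ, hct⟩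
  obtain ⟨u, hτu, hu⟩ := mem_nhdsGE_iff_exists_Ico_subset.mp hright
  have huτ : u ≤ τ := le_csInf ⟨b, hbB⟩ fun t ht => by
    by_contra! htu
    rcases lt_or_ge t τ with htτ | hτt
    · exact ht.2 (hbelow t ht.1.1 htτ)
    · exact ht.2 (hu ⟨hτt, htu⟩)
  exact huτ.not_gt hτu

variable {ξ' g' : ℝ → ℝ} {ζ' : EReal}

lemma abs_sub_le_of_abs_sub_driver_le (hg : IsLoewnerTraj ξ x ζ g)
    (hg' : IsLoewnerTraj ξ' x ζ' g') (hξ : ContinuousOn ξ (Ici 0))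
    (hξ' : ContinuousOn ξ' (Ici 0)) {τ a b η : ℝ} (hτ : (τ : EReal) < ζ) (hτ' : (τ : EReal) < ζ')
    (ha : 0 < a) (hb : 0 < b) (hga : ∀ t ∈ Ico 0 τ, a ≤ g t - ξ t)
    (hgb : ∀ t ∈ Ico 0 τ, b ≤ g' t - ξ' t) (hη : ∀ t ∈ Ico 0 τ, |ξ t - ξ' t| ≤ η) :
    ∀ t ∈ Icc 0 τ, |g t - g' t| ≤ η * (Real.exp (2 / (a * b) * t) - 1) := by
  set K := 2 / (a * b)
  have hK : 0 < K := by positivity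
  have hderiv : ∀ t ∈ Ico 0 τ, HasDerivWithinAt (fun t => g t - g' t)
      (2 / (g t - ξ t) - 2 / (g' t - ξ' t)) (Ici t) t := fun t ht =>
    (hg.hasDerivWithinAt hξ ht.1 ((EReal.coe_lt_coe_iff.mpr ht.2).trans hτ)).sub
      (hg'.hasDerivWithinAt hξ' ht.1 ((EReal.coe_lt_coe_iff.mpr ht.2).trans hτ'))
  have hbound : ∀ t ∈ Ico 0 τ, ‖2 / (g t - ξ t) - 2 / (g' t - ξ' t)‖ ≤
      K * ‖g t - g' t‖ + K * η := fun t ht => by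
    have hdiff : |(g t - ξ t) - (g' t - ξ' t)| ≤ |g t - g' t| + η :=
      calc |(g t - ξ t) - (g' t - ξ' t)| = |(g t - g' t) - (ξ t - ξ' t)| := by ring_nf
        _ ≤ |g t - g' t| + |ξ t - ξ' t| := abs_sub _ _
        _ ≤ |g t - g' t| + η := by gcongr; exact hη t ht
    calc ‖2 / (g t - ξ t) - 2 / (g' t - ξ' t)‖
        = 2 * |(g t - ξ t)⁻¹ - (g' t - ξ' t)⁻¹| := by
          rw [Real.norm_eq_abs, div_eq_mul_inv, div_eq_mul_inv, ← mul_sub, abs_mul, abs_two]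
      _ ≤ 2 * (|(g t - ξ t) - (g' t - ξ' t)| / (a * b)) := by
          gcongr; exact abs_inv_sub_inv_le ha hb (hga t ht) (hgb t ht)
      _ ≤ K * ‖g t - g' t‖ + K * η := by
          rw [Real.norm_eq_abs, ← mul_add, mul_div_assoc', div_mul_eq_mul_div]
          gcongr
  have hgron := norm_le_gronwallBound_of_norm_deriv_right_le (δ := 0)
    ((hg.cont.mono (Icc_subset_of_coe_lt hτ)).sub (hg'.cont.mono (Icc_subset_of_coe_lt hτ')))
    hderiv (by simp [hg.apply_zero, hg'.apply_zero]) hbound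
  intro t ht
  simpa [gronwallBound_of_K_ne_0 hK.ne', mul_div_cancel_left₀ _ hK.ne'] using hgron t ht

/-- `4 / ε ^ 2 = 2 / (ε / 2 * ε)` is the Lipschitz constant of `u ↦ 2 / u` between distances
`ε / 2` and `ε` from the drivers; while `g - ξ ≥ ε / 2`, Gronwall keeps `g` so close to `g'` that
in fact `g - ξ > ε / 2`. -/
lemma lt_lifetime_and_abs_sub_le (hg : IsLoewnerTraj ξ x ζ g) (hg' : IsLoewnerTraj ξ' x ζ' g')
    (hξ : ContinuousOn ξ (Ici 0)) (hξ' : ContinuousOn ξ' (Ici 0)) {T ε η : ℝ} (hT0 : 0 ≤ T)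
    (hT' : (T : EReal) < ζ') (hε : 0 < ε) (hε' : ∀ t ∈ Icc 0 T, ε ≤ g' t - ξ' t)
    (hηT : η * Real.exp (4 / ε ^ 2 * T) < ε / 2) (hη : ∀ t ∈ Icc 0 T, |ξ t - ξ' t| ≤ η) :
    (T : EReal) < ζ ∧
      ∀ t ∈ Icc 0 T, ε / 2 < g t - ξ t ∧ |g t - g' t| ≤ η * Real.exp (4 / ε ^ 2 * T) - η := by
  have hη0 : 0 ≤ η := (abs_nonneg _).trans (hη 0 ⟨le_rfl, hT0⟩)
  have hK : 2 / (ε / 2 * ε) = 4 / ε ^ 2 := by field_simp; ring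
  have hclose : ∀ τ ∈ Icc 0 T, (τ : EReal) < ζ → (∀ s ∈ Ico 0 τ, ε / 2 < g s - ξ s) →
      ∀ t ∈ Icc 0 τ, |g t - g' t| ≤ η * Real.exp (4 / ε ^ 2 * T) - η := by
    intro τ hτ hτζ hsep t ht
    have hsub : Ico 0 τ ⊆ Icc 0 T := fun s hs => ⟨hs.1, hs.2.le.trans hτ.2⟩
    have := abs_sub_le_of_abs_sub_driver_le hg hg' hξ hξ' hτζ
      ((EReal.coe_le_coe_iff.mpr hτ.2).trans_lt hT') (half_pos hε) hε
      (fun s hs => (hsep s hs).le) (fun s hs => hε' s (hsub hs)) (fun s hs => hη s (hsub hs)) t ht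
    rw [hK] at this
    have hexp : Real.exp (4 / ε ^ 2 * t) ≤ Real.exp (4 / ε ^ 2 * T) := by
      gcongr; exact ht.2.trans hτ.2
    nlinarith
  have hsep := hg.forall_lt_lifetime_and_lt_sub hξ (half_pos hε) fun τ hτ hτζ hsep => by
    have h₁ := abs_le.mp (hclose τ hτ hτζ hsep τ ⟨hτ.1, le_rfl⟩)
    have h₂ := abs_le.mp (hη τ hτ)
    linarith [hε' τ hτ]
  have hTζ := (hsep T ⟨hT0, le_rfl⟩).1
  exact ⟨hTζ, fun t ht => ⟨(hsep t ht).2,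
    hclose T ⟨hT0, le_rfl⟩ hTζ (fun s hs => (hsep s (Ico_subset_Icc_self hs)).2) t ht⟩⟩

end IsLoewnerTraj

lemma eventually_lt_lifetime_and_tendstoUniformlyOn {ι : Type*} {l : Filter ι}
    {ξ g : ι → ℝ → ℝ} {ζ : ι → EReal} {ξl gl : ℝ → ℝ} {ζl : EReal} {x T ε : ℝ}
    (hL : ∀ n, IsLoewnerTraj (ξ n) x (ζ n) (g n)) (hLl : IsLoewnerTraj ξl x ζl gl)
    (hc : ∀ n, ContinuousOn (ξ n) (Ici 0)) (hcl : ContinuousOn ξl (Ici 0))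
    (hconv : TendstoUniformlyOn ξ ξl l (Icc 0 T)) (hT0 : 0 ≤ T) (hTζ : (T : EReal) < ζl)
    (hε : 0 < ε) (hεl : ∀ t ∈ Icc 0 T, ε ≤ gl t - ξl t) :
    (∀ᶠ n in l, (T : EReal) < ζ n ∧ ∀ t ∈ Icc 0 T, ε / 2 < g n t - ξ n t) ∧
      TendstoUniformlyOn g gl l (Icc 0 T) := by
  set C := Real.exp (4 / ε ^ 2 * T)
  have hC : 0 < C := Real.exp_pos _
  have hstab : ∀ η > 0, η * C < ε / 2 → ∀ᶠ n in l, (T : EReal) < ζ n ∧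
      ∀ t ∈ Icc 0 T, ε / 2 < g n t - ξ n t ∧ |g n t - gl t| ≤ η * C - η := fun η hη hηC =>
    (Metric.tendstoUniformlyOn_iff.mp hconv η hη).mono fun n hn =>
      (hL n).lt_lifetime_and_abs_sub_le hLl (hc n) hcl hT0 hTζ hε hεl hηC fun t ht => by
        rw [abs_sub_comm, ← Real.dist_eq]; exact (hn t ht).le
  have hpos : ∀ δ > 0, 0 < min (ε / 4) δ / C := fun δ hδ => div_pos (lt_min (by positivity) hδ) hC
  have hsmall : ∀ δ > 0, min (ε / 4) δ / C * C < ε / 2 := fun δ hδ => by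
    rw [div_mul_cancel₀ _ hC.ne']
    linarith [min_le_left (ε / 4) δ]
  refine ⟨(hstab _ (hpos 1 one_pos) (hsmall 1 one_pos)).mono fun n hn =>
    ⟨hn.1, fun t ht => (hn.2 t ht).1⟩, Metric.tendstoUniformlyOn_iff.mpr fun δ hδ => ?_⟩
  filter_upwards [hstab _ (hpos δ hδ) (hsmall δ hδ)] with n hn t ht
  rw [Real.dist_eq, abs_sub_comm]
  calc |g n t - gl t| ≤ min (ε / 4) δ / C * C - min (ε / 4) δ / C := (hn.2 t ht).2
    _ < δ := by
      rw [div_mul_cancel₀ _ hC.ne']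
      linarith [min_le_right (ε / 4) δ, hpos δ hδ]

theorem stmt2_general
    (ξ : ℕ → ℝ → ℝ) (ξl : ℝ → ℝ)
    (hc : ∀ n, ContinuousOn (ξ n) (Set.Ici 0))
    (hcl : ContinuousOn ξl (Set.Ici 0))
    (hconv : ∀ T : ℝ, 0 ≤ T →
      TendstoUniformlyOn (fun n t => ξ n t) ξl Filter.atTop (Set.Icc 0 T))
    (x : ℝ)
    (ζ : ℕ → EReal) (g : ℕ → ℝ → ℝ) (ζl : EReal) (gl : ℝ → ℝ)
    (hL : ∀ n, IsLoewnerTraj (ξ n) x (ζ n) (g n))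
    (hLl : IsLoewnerTraj ξl x ζl gl) :
    ∀ T : ℝ, 0 ≤ T → (T : EReal) < ζl →
      (∀ᶠ n in Filter.atTop, (T : EReal) < ζ n) ∧
      TendstoUniformlyOn
        (fun n t => Real.exp (-2 * ∫ s in (0:ℝ)..t, ((g n s - ξ n s) ^ 2)⁻¹))
        (fun t => Real.exp (-2 * ∫ s in (0:ℝ)..t, ((gl s - ξl s) ^ 2)⁻¹))
        Filter.atTop (Set.Icc 0 T) := by
  intro T hT hTζ
  obtain ⟨ε, hε, hεl⟩ := hLl.exists_pos_le_sub hcl hT hTζ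
  obtain ⟨hsep, hg⟩ :=
    eventually_lt_lifetime_and_tendstoUniformlyOn hL hLl hc hcl (hconv T hT) hT hTζ hε hεl
  refine ⟨hsep.mono fun n hn => hn.1, ?_⟩
  exact (hg.sub (hconv T hT)).exp_neg_mul_integral_inv_sq hT (half_pos hε) zero_le_two
    (hsep.mono fun n hn t ht => (hn.2 t ht).le) (fun t ht => (half_le_self hε.le).trans (hεl t ht))
    (hsep.mono fun n hn => (hL n).continuousOn_sub (hc n) hn.1) (hLl.continuousOn_sub hcl hTζ)

/-- If continuous driving functions `ξⁿ` (vanishing at `0`) converge to `ξ` uniformly on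
compact subsets of `[0,∞)`, then for `x > 0` and every `T < ζ_x`, the derivatives
`Dⁿ_t = exp(−2∫₀ᵗ (gⁿ_s(x) − ξⁿ_s)⁻² ds)` are defined on `[0,T]` for all large `n` and
converge uniformly on `[0,T]` to `D_t = exp(−2∫₀ᵗ (g_s(x) − ξ_s)⁻² ds)`. -/
theorem stmt2
    (ξ : ℕ → ℝ → ℝ) (ξl : ℝ → ℝ)
    (hc : ∀ n, ContinuousOn (ξ n) (Set.Ici 0))
    (hcl : ContinuousOn ξl (Set.Ici 0))
    (h0 : ∀ n, ξ n 0 = 0) (h0l : ξl 0 = 0)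
    (hconv : ∀ T : ℝ, 0 ≤ T →
      TendstoUniformlyOn (fun n t => ξ n t) ξl Filter.atTop (Set.Icc 0 T))
    (x : ℝ) (hx : 0 < x)
    (ζ : ℕ → EReal) (g : ℕ → ℝ → ℝ) (ζl : EReal) (gl : ℝ → ℝ)
    (hL : ∀ n, IsLoewnerTraj (ξ n) x (ζ n) (g n))
    (hLl : IsLoewnerTraj ξl x ζl gl) :
    ∀ T : ℝ, 0 ≤ T → (T : EReal) < ζl →
      (∀ᶠ n in Filter.atTop, (T : EReal) < ζ n) ∧
      TendstoUniformlyOn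
        (fun n t => Real.exp (-2 * ∫ s in (0:ℝ)..t, ((g n s - ξ n s) ^ 2)⁻¹))
        (fun t => Real.exp (-2 * ∫ s in (0:ℝ)..t, ((gl s - ξl s) ^ 2)⁻¹))
        Filter.atTop (Set.Icc 0 T) :=
  stmt2_general ξ ξl hc hcl hconv x ζ g ζl gl hL hLl
end
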